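/- Let S be a semigroup and let S⁰ denote the semigroup obtained from S by adjoining a new zero element. Then: (1) S is Markov as a semigroup if and only if S⁰ is Markov as a semigroup; (2) S is robustly Markov with respect to some alphabet if and only if S⁰ is robustly Markov with respect to some alphabet; (3) S is strongly Markov if and only if S⁰ is strongly Markov. -/

import Mathlib

/-!
An alphabet for `S⁰` splits into letters sent to `0` and letters sent into `S`. Since `S⁰` has no
zero divisors, a word represents an element of `S` exactly when all its letters are of the second
kind, so these letters generate `S`; conversely an alphabet for `S` is completed to one for `S⁰` by
a single letter for `0`. Markov languages are transported along this correspondence: restrict a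
language for `S⁰` to the words over the nonzero letters, and extend a language for `S` by the
one-letter word for `0`. Regularity survives because preimages, images under injective letter
maps (their left quotients are images of left quotients) and finite languages are regular, and
geodesicity survives because `0` has length one while geodesics for elements of `S` never use `0`.
-/

open Function

/-- A language is regular if it is accepted by a deterministic finite automaton
with a finite state set. -/
def RegularLang {A : Type} (L : Language A) : Prop :=
  ∃ (Q : Type) (_ : Fintype Q) (M : DFA A Q), M.accepts = L

/-- The product of a nonempty word under the letter-assignment `φ`; the empty
word is sent to `none`. This is the induced map `φ⁺` on nonempty words. -/
def prodPlus {A S : Type} [Semigroup S] (φ : A → S) : List A → Option S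
  | [] => none
  | a :: w => some (w.foldl (fun s b => s * φ b) (φ a))

/-- The induced monoid homomorphism `φ*` from the free monoid of words. -/
def monProd {A M : Type} [Monoid M] (φ : A → M) (w : List A) : M :=
  (w.map φ).prod

/-- A semigroup Markov language for `S` over `A` (with respect to `φ`): a regular,
`+`-prefix-closed language of nonempty words mapping bijectively onto `S` under `φ⁺`. -/
structure IsSgMarkovLang {A S : Type} [Semigroup S] (φ : A → S) (L : Language A) : Prop where
  regular : RegularLang L
  not_empty_mem : [] ∉ L
  plus_prefix_closed : ∀ u v : List A, u ≠ [] → v ≠ [] → u ++ v ∈ L → u ∈ L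
  unique_rep : ∀ s : S, ∃! w : List A, w ∈ L ∧ prodPlus φ w = some s

/-- A robust semigroup Markov language: additionally every word of `L` has minimal
length among (nonempty) words representing the same element. -/
structure IsRobustSgMarkovLang {A S : Type} [Semigroup S] (φ : A → S) (L : Language A)
    extends IsSgMarkovLang φ L : Prop where
  min_length : ∀ w ∈ L, ∀ v : List A, prodPlus φ v = prodPlus φ w → w.length ≤ v.length

/-- A monoid Markov language for `M` over `A` (with respect to `φ`): a regular,
prefix-closed language mapping bijectively onto `M` under `φ*`. -/
structure IsMonMarkovLang {A M : Type} [Monoid M] (φ : A → M) (L : Language A) : Prop where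
  regular : RegularLang L
  prefix_closed : ∀ u v : List A, u ++ v ∈ L → u ∈ L
  unique_rep : ∀ m : M, ∃! w : List A, w ∈ L ∧ monProd φ w = m

/-- A robust monoid Markov language: additionally every word of `L` has minimal
length among words representing the same element. -/
structure IsRobustMonMarkovLang {A M : Type} [Monoid M] (φ : A → M) (L : Language A)
    extends IsMonMarkovLang φ L : Prop where
  min_length : ∀ w ∈ L, ∀ v : List A, monProd φ v = monProd φ w → w.length ≤ v.length

/-- `S` is Markov as a semigroup. -/
def SgMarkov (S : Type) [Semigroup S] : Prop :=
  ∃ (A : Type) (_ : Fintype A) (φ : A → S),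
    (∀ s : S, ∃ w : List A, prodPlus φ w = some s) ∧
    ∃ L : Language A, IsSgMarkovLang φ L

/-- `S` is robustly Markov (as a semigroup) with respect to some alphabet. -/
def SgRobustlyMarkov (S : Type) [Semigroup S] : Prop :=
  ∃ (A : Type) (_ : Fintype A) (φ : A → S),
    (∀ s : S, ∃ w : List A, prodPlus φ w = some s) ∧
    ∃ L : Language A, IsRobustSgMarkovLang φ L

/-- `S` is strongly Markov (as a semigroup). -/
def SgStronglyMarkov (S : Type) [Semigroup S] : Prop :=
  ∀ (A : Type) [Fintype A] (φ : A → S),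
    (∀ s : S, ∃ w : List A, prodPlus φ w = some s) →
    ∃ L : Language A, IsRobustSgMarkovLang φ L

/-- `M` is Markov as a monoid. -/
def MonMarkov (M : Type) [Monoid M] : Prop :=
  ∃ (A : Type) (_ : Fintype A) (φ : A → M),
    Surjective (monProd φ) ∧ ∃ L : Language A, IsMonMarkovLang φ L

/-- `M` is robustly Markov (as a monoid) with respect to some alphabet. -/
def MonRobustlyMarkov (M : Type) [Monoid M] : Prop :=
  ∃ (A : Type) (_ : Fintype A) (φ : A → M),
    Surjective (monProd φ) ∧ ∃ L : Language A, IsRobustMonMarkovLang φ L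

/-- `M` is strongly Markov (as a monoid). -/
def MonStronglyMarkov (M : Type) [Monoid M] : Prop :=
  ∀ (A : Type) [Fintype A] (φ : A → M),
    Surjective (monProd φ) →
    ∃ L : Language A, IsRobustMonMarkovLang φ L

namespace Language

variable {α β : Type} {L : Language α}

theorem isRegular_preimage_map (f : α → β) {L : Language β} (hL : L.IsRegular) :
    IsRegular (List.map f ⁻¹' L : Language α) := by
  obtain ⟨σ, _, M, rfl⟩ := hL
  exact ⟨σ, inferInstance, M.comap f, M.accepts_comap f⟩

theorem isRegular_of_finite (hL : (L : Set (List α)).Finite) : L.IsRegular := by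
  rw [isRegular_iff_finite_range_leftQuotient]
  -- every left quotient of `L` consists of suffixes of words of `L`
  have hsuffixes : (⋃ w ∈ L, {t : List α | t ∈ w.tails}).Finite :=
    hL.biUnion fun w _ => w.tails.finite_toSet
  refine hsuffixes.finite_subsets.subset ?_
  rintro _ ⟨x, rfl⟩ y hy
  exact Set.mem_biUnion hy ((List.mem_tails _ _).2 (List.suffix_append x y))

theorem leftQuotient_map_map {f : α → β} (hf : Injective f) (L : Language α) (u : List α) :
    (map f L).leftQuotient (u.map f) = map f (L.leftQuotient u) := by
  ext y
  constructor
  · rintro ⟨v, hv, hvy⟩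
    obtain ⟨u', t, rfl, hu', rfl⟩ := List.map_eq_append_iff.1 hvy
    obtain rfl := (List.map_injective_iff.2 hf) hu'
    exact ⟨t, hv, rfl⟩
  · rintro ⟨t, ht, rfl⟩
    exact ⟨u ++ t, ht, List.map_append⟩

theorem leftQuotient_map_eq_zero {f : α → β} (L : Language α) {x : List β}
    (hx : x ∉ Set.range (List.map f)) : (map f L).leftQuotient x = 0 := by
  ext y
  refine iff_of_false ?_ (notMem_zero y)
  rintro ⟨v, -, hvy⟩
  obtain ⟨u, -, -, hu, -⟩ := List.map_eq_append_iff.1 hvy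
  exact hx ⟨u, hu⟩

theorem IsRegular.map_of_injective {f : α → β} (hf : Injective f) (hL : L.IsRegular) :
    (map f L).IsRegular := by
  rw [isRegular_iff_finite_range_leftQuotient] at hL ⊢
  refine ((hL.image (map f)).insert 0).subset ?_
  rintro _ ⟨x, rfl⟩
  by_cases hx : x ∈ Set.range (List.map f)
  · obtain ⟨u, rfl⟩ := hx
    exact Or.inr ⟨_, ⟨u, rfl⟩, (leftQuotient_map_map hf L u).symm⟩
  · exact Or.inl (leftQuotient_map_eq_zero L hx)

end Language

theorem regularLang_iff_isRegular {α : Type} {L : Language α} : RegularLang L ↔ L.IsRegular :=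
  Iff.rfl

section prodPlus

variable {A B S T : Type} [Semigroup S] [Semigroup T]

theorem prodPlus_ne_none (φ : A → S) {w : List A} (hw : w ≠ []) : prodPlus φ w ≠ none := by
  cases w with
  | nil => exact absurd rfl hw
  | cons a w => simp [prodPlus]

theorem prodPlus_map (φ : B → S) (g : A → B) (w : List A) :
    prodPlus φ (w.map g) = prodPlus (φ ∘ g) w := by
  cases w <;> simp [prodPlus, List.foldl_map]

theorem prodPlus_comp_mulHom (f : S →ₙ* T) (φ : A → S) (w : List A) :
    prodPlus (f ∘ φ) w = (prodPlus φ w).map f := by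
  have hfold : ∀ (t : List A) (x : S),
      t.foldl (fun s b => s * f (φ b)) (f x) = f (t.foldl (fun s b => s * φ b) x) := by
    intro t
    induction t with
    | nil => exact fun _ => rfl
    | cons b t ih => exact fun x => by simp only [List.foldl_cons, ← map_mul, ih]
  cases w with
  | nil => rfl
  | cons a w => exact congrArg some (hfold w (φ a))

theorem foldl_mul_eq_zero_iff {M₀ : Type} [MulZeroClass M₀] [NoZeroDivisors M₀]
    (φ : A → M₀) (t : List A) (x : M₀) :
    t.foldl (fun s b => s * φ b) x = 0 ↔ x = 0 ∨ ∃ b ∈ t, φ b = 0 := by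
  induction t generalizing x with
  | nil => simp
  | cons b t ih => simp [ih, or_assoc]

theorem prodPlus_eq_some_zero_iff {M₀ : Type} [SemigroupWithZero M₀] [NoZeroDivisors M₀]
    (φ : A → M₀) {w : List A} : prodPlus φ w = some 0 ↔ ∃ b ∈ w, φ b = 0 := by
  cases w with
  | nil => simp [prodPlus]
  | cons a w => simp [prodPlus, foldl_mul_eq_zero_iff]

end prodPlus

structure IsZeroExtension {A B S : Type} (φ : A → S) (ψ : B → WithZero S) (g : A → B) :
    Prop where
  injective : Injective g
  apply_eq : ∀ a, ψ (g a) = φ a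
  mem_range : ∀ b, ψ b ≠ 0 → b ∈ Set.range g

theorem IsZeroExtension.of_inl {A S : Type} (φ : A → S) :
    IsZeroExtension φ (Sum.elim (fun a => (φ a : WithZero S)) fun _ : Unit => 0) Sum.inl where
  injective := Sum.inl_injective
  apply_eq _ := rfl
  mem_range
    | .inl a, _ => ⟨a, rfl⟩
    | .inr _, h => absurd rfl h

theorem IsZeroExtension.of_subtype_val {B S : Type} (ψ : B → WithZero S) :
    IsZeroExtension (fun b : {b // ψ b ≠ 0} => WithZero.unzero b.2) ψ Subtype.val where
  injective := Subtype.val_injective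
  apply_eq b := (WithZero.coe_unzero b.2).symm
  mem_range b hb := ⟨⟨b, hb⟩, rfl⟩

namespace IsZeroExtension

variable {A B S : Type} [Semigroup S] {φ : A → S} {ψ : B → WithZero S} {g : A → B}

theorem prodPlus_map (h : IsZeroExtension φ ψ g) (w : List A) :
    prodPlus ψ (w.map g) = (prodPlus φ w).map (↑) := by
  rw [_root_.prodPlus_map, show ψ ∘ g = _ from funext h.apply_eq]
  exact prodPlus_comp_mulHom ⟨_, WithZero.coe_mul⟩ φ w

theorem prodPlus_map_eq_coe_iff (h : IsZeroExtension φ ψ g) {w : List A} {s : S} :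
    prodPlus ψ (w.map g) = some ↑s ↔ prodPlus φ w = some s := by
  simp [h.prodPlus_map]

theorem prodPlus_map_ne_some_zero (h : IsZeroExtension φ ψ g) (w : List A) :
    prodPlus ψ (w.map g) ≠ some 0 := by
  simp [h.prodPlus_map]

theorem exists_map_eq_of_prodPlus_eq_coe (h : IsZeroExtension φ ψ g) {v : List B} {s : S}
    (hv : prodPlus ψ v = some ↑s) :
    ∃ w : List A, w.map g = v ∧ prodPlus φ w = some s := by
  have hletters : ∀ b ∈ v, b ∈ Set.range g := fun b hb => h.mem_range b fun hb0 =>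
    WithZero.coe_ne_zero <| Option.some_injective _ <|
      hv.symm.trans ((prodPlus_eq_some_zero_iff ψ).2 ⟨b, hb, hb0⟩)
  obtain ⟨w, rfl⟩ : v ∈ Set.range (List.map g) := Set.range_list_map g ▸ hletters
  exact ⟨w, rfl, h.prodPlus_map_eq_coe_iff.1 hv⟩

theorem exists_prodPlus_eq_of_withZero (h : IsZeroExtension φ ψ g)
    (hψ : ∀ x : WithZero S, ∃ v, prodPlus ψ v = some x) :
    ∀ s : S, ∃ w, prodPlus φ w = some s := fun s =>
  let ⟨_, hv⟩ := hψ s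
  let ⟨w, _, hw⟩ := h.exists_map_eq_of_prodPlus_eq_coe hv
  ⟨w, hw⟩

theorem exists_prodPlus_eq_withZero (h : IsZeroExtension φ ψ g)
    (hφ : ∀ s : S, ∃ w, prodPlus φ w = some s) {z : B} (hz : ψ z = 0) :
    ∀ x : WithZero S, ∃ v, prodPlus ψ v = some x := by
  intro x
  induction x using WithZero.recZeroCoe with
  | zero => exact ⟨[z], by simp [prodPlus, hz]⟩
  | coe s =>
    obtain ⟨w, hw⟩ := hφ s
    exact ⟨w.map g, h.prodPlus_map_eq_coe_iff.2 hw⟩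

theorem isSgMarkovLang_preimage (h : IsZeroExtension φ ψ g) {L : Language B}
    (hL : IsSgMarkovLang ψ L) :
    IsSgMarkovLang φ (List.map g ⁻¹' L) where
  regular := regularLang_iff_isRegular.2 <|
    Language.isRegular_preimage_map g (regularLang_iff_isRegular.1 hL.regular)
  not_empty_mem := hL.not_empty_mem
  plus_prefix_closed u v hu hv huv := by
    refine hL.plus_prefix_closed _ (v.map g) ?_ ?_ (List.map_append ▸ huv) <;> simpa
  unique_rep s := by
    obtain ⟨v, ⟨hvL, hv⟩, hv_unique⟩ := hL.unique_rep s
    obtain ⟨w, rfl, hw⟩ := h.exists_map_eq_of_prodPlus_eq_coe hv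
    refine ⟨w, ⟨hvL, hw⟩, fun w' ⟨hw'L, hw'⟩ => List.map_injective_iff.2 h.injective ?_⟩
    exact hv_unique _ ⟨hw'L, h.prodPlus_map_eq_coe_iff.2 hw'⟩

theorem isRobustSgMarkovLang_preimage (h : IsZeroExtension φ ψ g) {L : Language B}
    (hL : IsRobustSgMarkovLang ψ L) :
    IsRobustSgMarkovLang φ (List.map g ⁻¹' L) where
  toIsSgMarkovLang := h.isSgMarkovLang_preimage hL.toIsSgMarkovLang
  min_length w hw v hvw := by
    simpa using hL.min_length _ hw (v.map g) (by rw [h.prodPlus_map, h.prodPlus_map, hvw])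

theorem isSgMarkovLang_map_add_singleton (h : IsZeroExtension φ ψ g) {z : B} (hz : ψ z = 0)
    {L : Language A} (hL : IsSgMarkovLang φ L) :
    IsSgMarkovLang ψ (Language.map g L + {[z]}) where
  regular := regularLang_iff_isRegular.2 <|
    ((regularLang_iff_isRegular.1 hL.regular).map_of_injective h.injective).add
      (Language.isRegular_of_finite (Set.finite_singleton _))
  not_empty_mem := by
    rintro (⟨v, hv, hv_nil⟩ | h_nil)
    · exact hL.not_empty_mem (List.map_eq_nil_iff.1 hv_nil ▸ hv)
    · exact List.cons_ne_nil _ _ h_nil.symm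
  plus_prefix_closed u v hu hv := by
    rintro (⟨w, hw, hwuv⟩ | huv)
    · obtain ⟨u', v', rfl, rfl, rfl⟩ := List.map_eq_append_iff.1 hwuv
      have hu' : u' ≠ [] := by simpa using hu
      have hv' : v' ≠ [] := by simpa using hv
      exact Or.inl ⟨u', hL.plus_prefix_closed u' v' hu' hv' hw, rfl⟩
    · rcases List.append_eq_singleton_iff.1 huv with ⟨rfl, -⟩ | ⟨-, rfl⟩ <;> contradiction
  unique_rep x := by
    induction x using WithZero.recZeroCoe with
    | zero =>
      refine ⟨[z], ⟨Or.inr rfl, by simp [prodPlus, hz]⟩, ?_⟩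
      rintro _ ⟨⟨v, -, rfl⟩ | rfl, hv⟩
      · exact absurd hv (h.prodPlus_map_ne_some_zero v)
      · rfl
    | coe s =>
      obtain ⟨w, ⟨hwL, hw⟩, hw_unique⟩ := hL.unique_rep s
      refine ⟨w.map g, ⟨Or.inl ⟨w, hwL, rfl⟩, h.prodPlus_map_eq_coe_iff.2 hw⟩, ?_⟩
      rintro _ ⟨⟨v, hvL, rfl⟩ | rfl, hv⟩
      · rw [hw_unique v ⟨hvL, h.prodPlus_map_eq_coe_iff.1 hv⟩]
      · simp [prodPlus, hz] at hv

theorem isRobustSgMarkovLang_map_add_singleton (h : IsZeroExtension φ ψ g) {z : B}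
    (hz : ψ z = 0) {L : Language A} (hL : IsRobustSgMarkovLang φ L) :
    IsRobustSgMarkovLang ψ (Language.map g L + {[z]}) where
  toIsSgMarkovLang := h.isSgMarkovLang_map_add_singleton hz hL.toIsSgMarkovLang
  min_length := by
    rintro _ (⟨w, hwL, rfl⟩ | rfl) v hvw
    · obtain ⟨s, hw⟩ := Option.ne_none_iff_exists'.1
        (prodPlus_ne_none φ fun hw => hL.not_empty_mem (hw ▸ hwL))
      rw [h.prodPlus_map, hw] at hvw
      obtain ⟨v, rfl, hv⟩ := h.exists_map_eq_of_prodPlus_eq_coe hvw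
      simpa using hL.min_length w hwL v (hv.trans hw.symm)
    · have hv : v ≠ [] := by rintro rfl; simp [prodPlus] at hvw
      exact List.length_pos_iff.2 hv

end IsZeroExtension

section WithZero

variable {S : Type} [Semigroup S]

theorem sgMarkov_withZero_iff : SgMarkov (WithZero S) ↔ SgMarkov S := by
  constructor
  · rintro ⟨B, _, ψ, hψ, L, hL⟩
    have h := IsZeroExtension.of_subtype_val ψ
    exact ⟨_, Fintype.ofFinite _, _, h.exists_prodPlus_eq_of_withZero hψ, _,
      h.isSgMarkovLang_preimage hL⟩
  · rintro ⟨A, _, φ, hφ, L, hL⟩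
    have h := IsZeroExtension.of_inl φ
    exact ⟨A ⊕ Unit, inferInstance, _, h.exists_prodPlus_eq_withZero hφ (z := .inr ()) rfl, _,
      h.isSgMarkovLang_map_add_singleton (z := .inr ()) rfl hL⟩

theorem sgRobustlyMarkov_withZero_iff : SgRobustlyMarkov (WithZero S) ↔ SgRobustlyMarkov S := by
  constructor
  · rintro ⟨B, _, ψ, hψ, L, hL⟩
    have h := IsZeroExtension.of_subtype_val ψ
    exact ⟨_, Fintype.ofFinite _, _, h.exists_prodPlus_eq_of_withZero hψ, _,
      h.isRobustSgMarkovLang_preimage hL⟩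
  · rintro ⟨A, _, φ, hφ, L, hL⟩
    have h := IsZeroExtension.of_inl φ
    exact ⟨A ⊕ Unit, inferInstance, _, h.exists_prodPlus_eq_withZero hφ (z := .inr ()) rfl, _,
      h.isRobustSgMarkovLang_map_add_singleton (z := .inr ()) rfl hL⟩

theorem sgStronglyMarkov_withZero_iff : SgStronglyMarkov (WithZero S) ↔ SgStronglyMarkov S := by
  constructor
  · intro hS₀ A _ φ hφ
    have h := IsZeroExtension.of_inl φ
    obtain ⟨L, hL⟩ := hS₀ _ _ (h.exists_prodPlus_eq_withZero hφ (z := .inr ()) rfl)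
    exact ⟨_, h.isRobustSgMarkovLang_preimage hL⟩
  · intro hS B _ ψ hψ
    have h := IsZeroExtension.of_subtype_val ψ
    have := Fintype.ofFinite {b // ψ b ≠ 0}
    obtain ⟨L, hL⟩ := hS _ _ (h.exists_prodPlus_eq_of_withZero hψ)
    obtain ⟨v, hv⟩ := hψ 0
    -- `S⁰` has no zero divisors, so a word representing `0` contains a letter sent to `0`.
    obtain ⟨z, -, hz⟩ := (prodPlus_eq_some_zero_iff ψ).1 hv
    exact ⟨_, h.isRobustSgMarkovLang_map_add_singleton hz hL⟩

end WithZero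

/-- Adjoining a zero: `S` is Markov (resp. robustly Markov with respect to some
alphabet, strongly Markov) iff `S⁰` is. -/
theorem stmt16 {S : Type} [Semigroup S] :
    (SgMarkov S ↔ SgMarkov (WithZero S)) ∧
    (SgRobustlyMarkov S ↔ SgRobustlyMarkov (WithZero S)) ∧
    (SgStronglyMarkov S ↔ SgStronglyMarkov (WithZero S)) :=
  ⟨sgMarkov_withZero_iff.symm, sgRobustlyMarkov_withZero_iff.symm,
    sgStronglyMarkov_withZero_iff.symm⟩
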